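/- Assume that the compositional inverse ψ = φ^⟨-1⟩ of φ satisfies ψ(t) = t·h(ψ(t)), and let B be an upper triangular matrix satisfying A·B = B·A = I. Then for every nonnegative integer s and all 1 ≤ k ≤ n, [B^s]_{k,n} = (a_k/a_n)·C(n,k)·(d/dt)^{n-k}_{t=0}[ ((g(ψ(t)))^{-1})^s ], where (g∘ψ)^{-1} is the multiplicative inverse of the power series g∘ψ (which exists since g(0) ≠ 0) and C(n,k) is the binomial coefficient. -/

import Mathlib

open PowerSeries Finset

noncomputable section

/-- Product of two infinite matrices of complex numbers (indexed by positive integers,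
upper triangular): `[A·B]_{k,n} = ∑_{j=k}^{n} [A]_{k,j}·[B]_{j,n}`. -/
def triMul (A B : ℕ → ℕ → ℂ) : ℕ → ℕ → ℂ :=
  fun k n => ∑ j ∈ Finset.Icc k n, A k j * B j n

/-- The identity matrix. -/
def triId : ℕ → ℕ → ℂ := fun k n => if k = n then 1 else 0

/-- Powers of a matrix: `A^0 = I`, `A^{s+1} = A^s · A`. -/
def triPow (A : ℕ → ℕ → ℂ) : ℕ → ℕ → ℕ → ℂ
  | 0 => triId
  | s + 1 => triMul (triPow A s) A

/-- Composition `F ∘ G` of formal power series (intended for `G` with zero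
constant coefficient): the coefficient of `t^n` is `∑_{j=0}^{n} F_j · [t^n](G^j)`. -/
def psComp (F G : PowerSeries ℂ) : PowerSeries ℂ :=
  PowerSeries.mk fun n =>
    ∑ j ∈ Finset.range (n + 1), (PowerSeries.coeff j F) * (PowerSeries.coeff n (G ^ j))

/-- Iterated composition: `φ^⟨0⟩ = t`, `φ^⟨s+1⟩ = φ^⟨s⟩ ∘ φ`. -/
def iterComp (φ : PowerSeries ℂ) : ℕ → PowerSeries ℂ
  | 0 => PowerSeries.X
  | s + 1 => psComp (iterComp φ s) φ

/-!
The entries of `A` are computed by Lagrange inversion. Composing `ψ = t·h(ψ)` with `φ` gives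
`φ·h = t`, and then `[t^n] h^(n+1) (φ^i)'` is `n+1` for `i = n+1` and `0` otherwise (for `1 ≤ i ≤ n`
it is a difference of two equal coefficients, for `i > n+1` the factor `(φh)^(n+1) = t^(n+1)`
kills it). Hence `[t^n] h^(n+1) (F ∘ φ)' = (n+1) [t^(n+1)] F`, and `F = t^k·(g ∘ ψ)` shows that
`A` is the Appell matrix `[A]_{k,n} = (a_k/a_n)(n!/k!)[t^(n-k)] (g ∘ ψ)`. Appell matrices multiply
like their generating series, so `B`, the inverse of `A`, is the Appell matrix of `(g ∘ ψ)⁻¹`, and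
`B^s` that of `(g ∘ ψ)⁻¹ ^ s`.
-/

theorem coeff_pow_eq_zero_of_lt {R : Type*} [CommSemiring R] {G : R⟦X⟧}
    (hG : constantCoeff G = 0) {n j : ℕ} (hnj : n < j) : coeff n (G ^ j) = 0 :=
  X_pow_dvd_iff.mp (pow_dvd_pow_of_dvd (X_dvd_iff.mpr hG) j) n hnj

theorem coeff_psComp_eq_coeff_sum {G : ℂ⟦X⟧} (hG : constantCoeff G = 0) (F : ℂ⟦X⟧)
    {m N : ℕ} (hmN : m < N) :
    coeff m (psComp F G) = coeff m (∑ j ∈ range N, coeff j F • G ^ j) := by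
  simp only [psComp, coeff_mk, map_sum, coeff_smul, smul_eq_mul]
  refine sum_subset (range_subset_range.mpr hmN) fun j _ hj => ?_
  rw [coeff_pow_eq_zero_of_lt hG (by simpa using hj), mul_zero]

theorem psComp_eq_subst {G : ℂ⟦X⟧} (hG : constantCoeff G = 0) (F : ℂ⟦X⟧) :
    psComp F G = F.subst G := by
  ext n
  rw [coeff_subst' (HasSubst.of_constantCoeff_zero' hG), psComp, coeff_mk,
    finsum_eq_sum_of_support_subset (s := range (n + 1))]
  · rfl
  · intro j hj
    by_contra hjn
    exact hj (by simp [coeff_pow_eq_zero_of_lt hG (by simpa using hjn)])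

theorem constantCoeff_psComp (F G : ℂ⟦X⟧) : constantCoeff (psComp F G) = constantCoeff F := by
  rw [← coeff_zero_eq_constantCoeff_apply, psComp, coeff_mk]
  simp

theorem coeff_X_mul_derivative {R : Type*} [CommSemiring R] (f : R⟦X⟧) (d : ℕ) :
    coeff d (X * d⁄dX R f) = d * coeff d f := by
  rcases d with _ | d
  · simp
  · rw [coeff_succ_X_mul, coeff_derivative, mul_comm]
    push_cast; rfl

theorem coeff_mul_derivative_eq_zero_of_X_pow_dvd {R : Type*} [CommSemiring R] (f : R⟦X⟧)
    {G : R⟦X⟧} {n : ℕ} (hG : X ^ (n + 2) ∣ G) : coeff n (f * d⁄dX R G) = 0 := by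
  have hDG : X ^ (n + 1) ∣ d⁄dX R G := X_pow_dvd_iff.mpr fun m hm => by
    rw [coeff_derivative, X_pow_dvd_iff.mp hG (m + 1) (by omega), zero_mul]
  exact X_pow_dvd_iff.mp (dvd_mul_of_dvd_right hDG f) n (by omega)

section Residue

variable {K : Type*} [Field K] [CharZero K]

theorem coeff_succ_X_mul_pow_mul_derivative (h : K⟦X⟧) (d : ℕ) :
    coeff (d + 1) (X * (h ^ d * d⁄dX K h)) = coeff (d + 1) (h ^ (d + 1)) := by
  have hD : X * d⁄dX K (h ^ (d + 1)) = C (d + 1 : K) * (X * (h ^ d * d⁄dX K h)) := by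
    rw [derivative_pow, map_add, map_natCast, map_one]
    push_cast
    ring
  have := coeff_X_mul_derivative (h ^ (d + 1)) (d + 1)
  rw [hD, coeff_C_mul, Nat.cast_succ] at this
  exact mul_left_cancel₀ (Nat.cast_add_one_ne_zero d) this

variable {φ h : K⟦X⟧}

theorem coeff_pow_mul_derivative_pow (hφ0 : constantCoeff φ = 0) (hφh : φ * h = X) (n i : ℕ) :
    coeff n (h ^ (n + 1) * d⁄dX K (φ ^ i)) = if i = n + 1 then (n + 1 : K) else 0 := by
  have hD : h * d⁄dX K φ + φ * d⁄dX K h = 1 := by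
    have := congrArg (d⁄dX K) hφh
    rw [Derivation.leibniz, derivative_X, smul_eq_mul, smul_eq_mul] at this
    linear_combination this
  rcases i with _ | j
  · simp
  rw [derivative_pow, add_tsub_cancel_right, ← map_natCast (C (R := K)),
    show h ^ (n + 1) * (C ((j + 1 : ℕ) : K) * φ ^ j * d⁄dX K φ)
      = C ((j + 1 : ℕ) : K) * (h ^ (n + 1) * φ ^ j * d⁄dX K φ) by ring, coeff_C_mul]
  rcases lt_trichotomy j n with hjn | rfl | hnj
  · obtain ⟨d, rfl⟩ := Nat.exists_eq_add_of_lt hjn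
    have hpow : φ ^ j * h ^ j = X ^ j := by rw [← mul_pow, hφh]
    have key : h ^ (j + d + 1 + 1) * φ ^ j * d⁄dX K φ
        = X ^ j * (h ^ (d + 1) - X * (h ^ d * d⁄dX K h)) := by
      linear_combination h ^ (d + 2) * d⁄dX K φ * hpow + X ^ j * h ^ (d + 1) * hD
        - X ^ j * h ^ d * d⁄dX K h * hφh
    rw [key, show j + d + 1 = j + (d + 1) by ring, coeff_X_pow_mul', if_pos (by omega),
      add_tsub_cancel_left, map_sub, coeff_succ_X_mul_pow_mul_derivative, sub_self, mul_zero,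
      if_neg (by omega)]
  · have key : h ^ (j + 1) * φ ^ j * d⁄dX K φ = X ^ j * (1 - φ * d⁄dX K h) := by
      linear_combination (h * d⁄dX K φ) * (by rw [← mul_pow, hφh] : φ ^ j * h ^ j = X ^ j)
        + X ^ j * hD
    rw [key, coeff_X_pow_mul', if_pos le_rfl, tsub_self, coeff_zero_eq_constantCoeff_apply]
    simp [hφ0]
  · obtain ⟨e, rfl⟩ := Nat.exists_eq_add_of_lt hnj
    have key : h ^ (n + 1) * φ ^ (n + e + 1) * d⁄dX K φ = X ^ (n + 1) * (φ ^ e * d⁄dX K φ) := by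
      rw [← hφh]
      ring
    rw [key, coeff_X_pow_mul', if_neg (by omega), mul_zero, if_neg (by omega)]

end Residue

theorem coeff_pow_mul_derivative_psComp {φ h : ℂ⟦X⟧} (hφ0 : constantCoeff φ = 0)
    (hφh : φ * h = X) (F : ℂ⟦X⟧) (n : ℕ) :
    coeff n (h ^ (n + 1) * d⁄dX ℂ (psComp F φ)) = (n + 1) * coeff (n + 1) F := by
  set P := ∑ j ∈ range (n + 2), coeff j F • φ ^ j
  have hFP : X ^ (n + 2) ∣ psComp F φ - P := X_pow_dvd_iff.mpr fun m hm => by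
    rw [map_sub, coeff_psComp_eq_coeff_sum hφ0 F hm, sub_self]
  have hcongr : coeff n (h ^ (n + 1) * d⁄dX ℂ (psComp F φ))
      = coeff n (h ^ (n + 1) * d⁄dX ℂ P) := by
    rw [← sub_eq_zero, ← map_sub, ← mul_sub, ← map_sub]
    exact coeff_mul_derivative_eq_zero_of_X_pow_dvd _ hFP
  simp only [hcongr, P, map_sum, Derivation.map_smul, mul_sum, mul_smul_comm, coeff_smul,
    smul_eq_mul, coeff_pow_mul_derivative_pow hφ0 hφh, mul_ite, mul_zero, sum_ite_eq',
    mem_range, show n + 1 < n + 2 by omega, if_true]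
  ring

section LagrangeInversion

variable {φ ψ h : ℂ⟦X⟧} (hφ0 : constantCoeff φ = 0) (hψ0 : constantCoeff ψ = 0)
  (hψφ : psComp ψ φ = X)
include hφ0 hψ0 hψφ

theorem psComp_psComp_eq_self (F : ℂ⟦X⟧) : psComp (psComp F ψ) φ = F := by
  rw [psComp_eq_subst hφ0, psComp_eq_subst hψ0,
    subst_comp_subst_apply (HasSubst.of_constantCoeff_zero' hψ0)
      (HasSubst.of_constantCoeff_zero' hφ0), ← psComp_eq_subst hφ0, hψφ, X_subst]

theorem mul_eq_X_of_eq_X_mul_psComp (hψ : ψ = X * psComp h ψ) : φ * h = X := by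
  have hφ := HasSubst.of_constantCoeff_zero' hφ0
  calc φ * h = psComp (X * psComp h ψ) φ := by
        rw [psComp_eq_subst hφ0, subst_mul hφ, subst_X hφ, ← psComp_eq_subst hφ0,
          psComp_psComp_eq_self hφ0 hψ0 hψφ]
    _ = X := by rw [← hψ, hψφ]

theorem coeff_pow_mul_derivative_pow_mul (hφh : φ * h = X) (g : ℂ⟦X⟧) {k n : ℕ}
    (hkn : k ≤ n + 1) :
    coeff n (h ^ (n + 1) * d⁄dX ℂ (φ ^ k * g)) = (n + 1) * coeff (n + 1 - k) (psComp g ψ) := by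
  have hφ := HasSubst.of_constantCoeff_zero' hφ0
  have hcomp : psComp (X ^ k * psComp g ψ) φ = φ ^ k * g := by
    rw [psComp_eq_subst hφ0, subst_mul hφ, subst_pow hφ, subst_X hφ, ← psComp_eq_subst hφ0,
      psComp_psComp_eq_self hφ0 hψ0 hψφ]
  rw [← hcomp, coeff_pow_mul_derivative_psComp hφ0 hφh, coeff_X_pow_mul', if_pos hkn]

end LagrangeInversion

section TriangularMatrix

theorem triMul_congr {M M' N N' : ℕ → ℕ → ℂ} {k n : ℕ}
    (hM : ∀ j ∈ Icc k n, M k j = M' k j) (hN : ∀ j ∈ Icc k n, N j n = N' j n) :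
    triMul M N k n = triMul M' N' k n :=
  sum_congr rfl fun j hj => by rw [hM j hj, hN j hj]

theorem triMul_assoc (M N P : ℕ → ℕ → ℂ) (k n : ℕ) :
    triMul (triMul M N) P k n = triMul M (triMul N P) k n := by
  simp only [triMul, sum_mul, mul_sum, mul_assoc]
  exact sum_comm' fun j i => by simp only [mem_Icc]; omega

theorem triMul_triId (M : ℕ → ℕ → ℂ) {k n : ℕ} (hkn : k ≤ n) : triMul M triId k n = M k n := by
  simp [triMul, triId, hkn]

theorem triId_triMul (M : ℕ → ℕ → ℂ) {k n : ℕ} (hkn : k ≤ n) : triMul triId M k n = M k n := by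
  simp [triMul, triId, hkn]

theorem eq_of_triMul_eq_triId {A B M : ℕ → ℕ → ℂ}
    (hBA : ∀ k n, 1 ≤ k → k ≤ n → triMul B A k n = triId k n)
    (hAM : ∀ k n, 1 ≤ k → k ≤ n → triMul A M k n = triId k n)
    {k n : ℕ} (hk : 1 ≤ k) (hkn : k ≤ n) : B k n = M k n := by
  have hIcc {j : ℕ} (hj : j ∈ Icc k n) : 1 ≤ j ∧ k ≤ j ∧ j ≤ n := by
    rw [mem_Icc] at hj; omega
  calc B k n = triMul B triId k n := (triMul_triId B hkn).symm
    _ = triMul B (triMul A M) k n :=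
        triMul_congr (fun _ _ => rfl) fun j hj => (hAM j n (hIcc hj).1 (hIcc hj).2.2).symm
    _ = triMul (triMul B A) M k n := (triMul_assoc B A M k n).symm
    _ = triMul triId M k n :=
        triMul_congr (fun j hj => hBA k j hk (hIcc hj).2.1) fun _ _ => rfl
    _ = M k n := triId_triMul M hkn

end TriangularMatrix

theorem choose_mul_factorial_sub_eq_div {k n : ℕ} (hkn : k ≤ n) :
    (n.choose k : ℂ) * (n - k).factorial = n.factorial / k.factorial := by
  rw [eq_div_iff (Nat.cast_ne_zero.mpr k.factorial_ne_zero),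
    ← Nat.choose_mul_factorial_mul_factorial hkn]
  push_cast
  ring

theorem sum_Icc_coeff_mul_coeff (F G : ℂ⟦X⟧) {k n : ℕ} (hkn : k ≤ n) :
    ∑ j ∈ Icc k n, coeff (j - k) F * coeff (n - j) G = coeff (n - k) (F * G) := by
  rw [coeff_mul, Nat.sum_antidiagonal_eq_sum_range_succ_mk, ← Finset.Ico_add_one_right_eq_Icc,
    sum_Ico_eq_sum_range, show n + 1 - k = n - k + 1 by omega]
  exact sum_congr rfl fun i hi => by
    rw [mem_range] at hi
    rw [add_tsub_cancel_left, show n - (k + i) = n - k - i by omega]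

/-- The exponential Riordan array `(F, t)` of the Appell subgroup, conjugated by `diag (a k)`. -/
def appellMatrix (a : ℕ → ℂ) (F : ℂ⟦X⟧) : ℕ → ℕ → ℂ :=
  fun k n => a k / a n * (n.choose k : ℂ) * ((n - k).factorial * coeff (n - k) F)

theorem appellMatrix_of_le (a : ℕ → ℂ) (F : ℂ⟦X⟧) {k n : ℕ} (hkn : k ≤ n) :
    appellMatrix a F k n = a k / a n * (n.factorial / k.factorial) * coeff (n - k) F := by
  rw [appellMatrix, ← choose_mul_factorial_sub_eq_div hkn]
  ring

section AppellMatrix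

variable {a : ℕ → ℂ} (ha : ∀ j, 1 ≤ j → a j ≠ 0)
include ha

theorem appellMatrix_one {k n : ℕ} (hk : 1 ≤ k) (hkn : k ≤ n) :
    appellMatrix a 1 k n = triId k n := by
  rcases hkn.eq_or_lt with rfl | hlt
  · simp [appellMatrix, triId, ha k hk]
  · simp [appellMatrix, triId, coeff_one, hlt.ne, (Nat.sub_pos_of_lt hlt).ne']

theorem triMul_appellMatrix (F G : ℂ⟦X⟧) {k n : ℕ} (hk : 1 ≤ k) (hkn : k ≤ n) :
    triMul (appellMatrix a F) (appellMatrix a G) k n = appellMatrix a (F * G) k n := by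
  have hterm : ∀ j ∈ Icc k n, appellMatrix a F k j * appellMatrix a G j n
      = a k / a n * (n.factorial / k.factorial) * (coeff (j - k) F * coeff (n - j) G) := by
    intro j hj
    rw [mem_Icc] at hj
    have haj := ha j (hk.trans hj.1)
    have hj! : (j.factorial : ℂ) ≠ 0 := Nat.cast_ne_zero.mpr j.factorial_ne_zero
    rw [appellMatrix_of_le a F hj.1, appellMatrix_of_le a G hj.2]
    field_simp
  rw [triMul, sum_congr rfl hterm, ← mul_sum, sum_Icc_coeff_mul_coeff F G hkn,
    appellMatrix_of_le a _ hkn]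

end AppellMatrix

theorem triPow_eq_appellMatrix {a : ℕ → ℂ} (ha : ∀ j, 1 ≤ j → a j ≠ 0) {B : ℕ → ℕ → ℂ}
    {F : ℂ⟦X⟧} (hB : ∀ k n, 1 ≤ k → k ≤ n → B k n = appellMatrix a F k n) (s : ℕ) {k n : ℕ}
    (hk : 1 ≤ k) (hkn : k ≤ n) : triPow B s k n = appellMatrix a (F ^ s) k n := by
  induction s generalizing n with
  | zero => exact (appellMatrix_one ha hk hkn).symm
  | succ s ih =>
    have hIcc {j : ℕ} (hj : j ∈ Icc k n) : k ≤ j ∧ j ≤ n := mem_Icc.mp hj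
    rw [triPow, triMul_congr (fun j hj => ih (hIcc hj).1)
      (fun j hj => hB j n (hk.trans (hIcc hj).1) (hIcc hj).2), triMul_appellMatrix ha _ _ hk hkn,
      pow_succ]

theorem stmt8_general (a : ℕ → ℂ) (ha : ∀ n, 1 ≤ n → a n ≠ 0)
    (φ g h : PowerSeries ℂ)
    (hφ0 : constantCoeff φ = 0)
    (hne : constantCoeff (derivativeFun φ) * constantCoeff g * constantCoeff h ≠ 0)
    (ψ : PowerSeries ℂ) (hψ0 : constantCoeff ψ = 0)
    (hψφ : psComp ψ φ = PowerSeries.X)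
    (hψ : ψ = PowerSeries.X * psComp h ψ)
    (A B : ℕ → ℕ → ℂ)
    (hA : ∀ k n, 1 ≤ k → k ≤ n →
      A k n = a k / a n * (1 / k.factorial) *
        (((n - 1).factorial : ℂ) * coeff (n - 1) (h ^ n * derivativeFun (φ ^ k * g))))
    (hBA : ∀ k n, 1 ≤ k → 1 ≤ n → triMul B A k n = triId k n)
    (s : ℕ) (k n : ℕ) (hk : 1 ≤ k) (hkn : k ≤ n) :
    triPow B s k n = a k / a n * (n.choose k : ℂ) *
      (((n - k).factorial : ℂ) * coeff (n - k) (((psComp g ψ)⁻¹) ^ s)) := by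
  have hφh := mul_eq_X_of_eq_X_mul_psComp hφ0 hψ0 hψφ hψ
  set E := psComp g ψ
  have hg0 : constantCoeff g ≠ 0 := right_ne_zero_of_mul (left_ne_zero_of_mul hne)
  have hE : E * E⁻¹ = 1 := PowerSeries.mul_inv_cancel E (by rwa [constantCoeff_psComp])
  have hAE : ∀ k n, 1 ≤ k → k ≤ n → A k n = appellMatrix a E k n := by
    intro k n hk hkn
    obtain ⟨m, rfl⟩ : ∃ m, n = m + 1 := ⟨n - 1, by omega⟩
    rw [hA k _ hk hkn, add_tsub_cancel_right, show derivativeFun (φ ^ k * g) = d⁄dX ℂ (φ ^ k * g)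
      from rfl, coeff_pow_mul_derivative_pow_mul hφ0 hψ0 hψφ hφh g hkn, appellMatrix_of_le a E hkn,
      Nat.factorial_succ]
    push_cast
    ring
  have hAM : ∀ k n, 1 ≤ k → k ≤ n → triMul A (appellMatrix a E⁻¹) k n = triId k n := by
    intro k n hk hkn
    rw [triMul_congr (fun j hj => hAE k j hk (mem_Icc.mp hj).1) fun _ _ => rfl,
      triMul_appellMatrix ha _ _ hk hkn, hE, appellMatrix_one ha hk hkn]
  have hBE : ∀ k n, 1 ≤ k → k ≤ n → B k n = appellMatrix a E⁻¹ k n := fun _ _ hk hkn =>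
    eq_of_triMul_eq_triId (fun k n hk hkn => hBA k n hk (hk.trans hkn)) hAM hk hkn
  exact triPow_eq_appellMatrix ha hBE s hk hkn

/-- Corollary: if the compositional inverse `ψ` of `φ` satisfies `ψ(t) = t·h(ψ(t))` and `B`
is an upper triangular two-sided inverse of `A`, then
`[B^s]_{k,n} = (a_k/a_n)·C(n,k)·(d/dt)^{n-k}_{t=0}[((g(ψ(t)))^{-1})^s]`. -/
theorem stmt8 (a : ℕ → ℂ) (ha : ∀ n, 1 ≤ n → a n ≠ 0)
    (φ g h : PowerSeries ℂ)
    (hφ0 : constantCoeff φ = 0)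
    (hne : constantCoeff (derivativeFun φ) * constantCoeff g * constantCoeff h ≠ 0)
    (ψ : PowerSeries ℂ) (hψ0 : constantCoeff ψ = 0)
    (hψφ : psComp ψ φ = PowerSeries.X) (hφψ : psComp φ ψ = PowerSeries.X)
    (hψ : ψ = PowerSeries.X * psComp h ψ)
    (A B : ℕ → ℕ → ℂ)
    (hAtri : ∀ k n, n < k → A k n = 0)
    (hBtri : ∀ k n, n < k → B k n = 0)
    (hA : ∀ k n, 1 ≤ k → k ≤ n →
      A k n = a k / a n * (1 / k.factorial) *
        (((n - 1).factorial : ℂ) * coeff (n - 1) (h ^ n * derivativeFun (φ ^ k * g))))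
    (hAB : ∀ k n, 1 ≤ k → 1 ≤ n → triMul A B k n = triId k n)
    (hBA : ∀ k n, 1 ≤ k → 1 ≤ n → triMul B A k n = triId k n)
    (s : ℕ) (k n : ℕ) (hk : 1 ≤ k) (hkn : k ≤ n) :
    triPow B s k n = a k / a n * (n.choose k : ℂ) *
      (((n - k).factorial : ℂ) * coeff (n - k) (((psComp g ψ)⁻¹) ^ s)) :=
  stmt8_general a ha φ g h hφ0 hne ψ hψ0 hψφ hψ A B hA hBA s k n hk hkn
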